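/- If ψ : X × X → R is a negative definite kernel with ψ(x,x) = 0 for all x, then for every γ > 0 the function (x,y) ↦ exp(−γ ψ(x,y)) is a positive definite kernel on X (Schoenberg's theorem, one direction). -/

import Mathlib

/-!
Fix a base point `x₀`. Testing `ψ` against `x₀, x₁, …, xₙ` with weights `-∑ bᵢ, b₁, …, bₙ`
(which sum to zero) shows that `φ(x, y) = ψ(x, x₀) + ψ(y, x₀) - ψ(x, y)` is positive definite;
this is where `ψ(x₀, x₀) = 0` enters. Positive definite kernels are closed under pointwise
products (Schur), nonnegative multiples and pointwise limits of sums, hence under the entrywise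
exponential, and under `K ↦ f x * f y * K x y`. Finally
`exp (-γ ψ(x, y)) = f x * f y * exp (γ φ(x, y))` with `f x = exp (-γ ψ(x, x₀))`.
-/

/-- A symmetric function `K : X → X → ℝ` is a positive definite kernel if every
Gram matrix is positive semidefinite. -/
def IsPosDefKernel {X : Type*} (K : X → X → ℝ) : Prop :=
  (∀ x y, K x y = K y x) ∧
  ∀ (N : ℕ) (x : Fin N → X) (c : Fin N → ℝ),
    0 ≤ ∑ i, ∑ j, c i * c j * K (x i) (x j)

open Finset Matrix

namespace IsPosDefKernel

variable {X : Type*} {K L : X → X → ℝ}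

theorem of_isEmpty [IsEmpty X] (K : X → X → ℝ) : IsPosDefKernel K :=
  ⟨isEmptyElim, fun N x c => by
    have : IsEmpty (Fin N) := x.isEmpty
    simp⟩

theorem _root_.isPosDefKernel_iff_posSemidef :
    IsPosDefKernel K ↔ ∀ (N : ℕ) (x : Fin N → X), (of fun i j => K (x i) (x j)).PosSemidef := by
  have quad (N : ℕ) (x : Fin N → X) (c : Fin N → ℝ) :
      star c ⬝ᵥ (of (fun i j => K (x i) (x j)) *ᵥ c) = ∑ i, ∑ j, c i * c j * K (x i) (x j) := by
    simp only [dotProduct, mulVec, star_trivial, of_apply, mul_sum]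
    exact sum_congr rfl fun i _ => sum_congr rfl fun j _ => by ring
  simp only [posSemidef_iff_dotProduct_mulVec, quad]
  refine ⟨fun hK N x => ⟨?_, hK.2 N x⟩, fun hK => ⟨fun a b => ?_, fun N x => (hK N x).2⟩⟩
  · ext i j
    simp [hK.1 (x i) (x j)]
  · simpa using congrFun₂ (hK 2 ![a, b]).1 1 0

theorem mul (hK : IsPosDefKernel K) (hL : IsPosDefKernel L) :
    IsPosDefKernel (fun x y => K x y * L x y) :=
  isPosDefKernel_iff_posSemidef.2 fun N x =>
    (isPosDefKernel_iff_posSemidef.1 hK N x).hadamard (isPosDefKernel_iff_posSemidef.1 hL N x)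

theorem one : IsPosDefKernel (fun _ _ : X => (1 : ℝ)) :=
  ⟨fun _ _ => rfl, fun N x c => by
    simpa only [mul_one, ← mul_sum, ← sum_mul] using mul_self_nonneg (∑ i, c i)⟩

theorem pow (hK : IsPosDefKernel K) (n : ℕ) : IsPosDefKernel (fun x y => K x y ^ n) := by
  induction n with
  | zero => simpa using one
  | succ n ih => simpa only [pow_succ] using ih.mul hK

theorem const_mul (hK : IsPosDefKernel K) {a : ℝ} (ha : 0 ≤ a) :
    IsPosDefKernel (fun x y => a * K x y) :=
  ⟨fun x y => by simp only [hK.1 x y], fun N x c => by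
    simpa only [mul_sum, mul_left_comm a] using mul_nonneg ha (hK.2 N x c)⟩

theorem apply_mul_apply_mul (hK : IsPosDefKernel K) (f : X → ℝ) :
    IsPosDefKernel (fun x y => f x * f y * K x y) :=
  ⟨fun x y => by simp only [hK.1 x y, mul_comm (f x)], fun N x c => by
    convert hK.2 N x (fun i => c i * f (x i)) using 3 with i _ j _
    ring⟩

theorem of_hasSum {ι : Type*} {K : ι → X → X → ℝ} (hK : ∀ n, IsPosDefKernel (K n))
    (hL : ∀ x y, HasSum (fun n => K n x y) (L x y)) : IsPosDefKernel L := by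
  refine ⟨fun x y => (hL x y).unique ?_, fun N x c => ?_⟩
  · simpa only [(hK _).1 x y] using hL y x
  · have hsum : HasSum (fun n => ∑ i, ∑ j, c i * c j * K n (x i) (x j))
        (∑ i, ∑ j, c i * c j * L (x i) (x j)) :=
      hasSum_sum fun i _ => hasSum_sum fun j _ => (hL _ _).mul_left _
    exact hsum.nonneg fun n => (hK n).2 N x c

theorem exp (hK : IsPosDefKernel K) : IsPosDefKernel (fun x y => Real.exp (K x y)) :=
  of_hasSum (fun n => (hK.pow n).const_mul (inv_nonneg.2 (Nat.cast_nonneg n.factorial)))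
    fun x y => by
      simpa only [div_eq_inv_mul, Real.exp_eq_exp_ℝ] using
        NormedSpace.expSeries_div_hasSum_exp (K x y)

end IsPosDefKernel

theorem isPosDefKernel_centered {X : Type*} {ψ : X → X → ℝ}
    (hsymm : ∀ x y, ψ x y = ψ y x)
    (hdiag : ∀ x, ψ x x = 0)
    (hneg : ∀ (N : ℕ) (x : Fin N → X) (c : Fin N → ℝ), (∑ i, c i) = 0 →
      ∑ i, ∑ j, c i * c j * ψ (x i) (x j) ≤ 0) (x₀ : X) :
    IsPosDefKernel (fun x y => ψ x x₀ + ψ y x₀ - ψ x y) := by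
  refine ⟨fun x y => by simp only [hsymm x y]; ring, fun N x b => ?_⟩
  have h := hneg (N + 1) (Fin.cons x₀ x) (Fin.cons (-∑ i, b i) b) (by simp [Fin.sum_univ_succ])
  simp only [Fin.sum_univ_succ, Fin.cons_zero, Fin.cons_succ, hdiag, hsymm x₀, mul_zero, zero_add,
    sum_add_distrib] at h
  have hrow (f : Fin N → ℝ) : ∑ i, ∑ j, b i * b j * f i = (∑ i, b i * f i) * ∑ j, b j := by
    rw [sum_mul_sum]
    exact sum_congr rfl fun i _ => sum_congr rfl fun j _ => by ring
  have hcol (f : Fin N → ℝ) : ∑ i, ∑ j, b i * b j * f j = (∑ i, b i * f i) * ∑ j, b j := by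
    rw [sum_comm, sum_mul_sum]
    exact sum_congr rfl fun i _ => sum_congr rfl fun j _ => by ring
  have hpull (a : ℝ) (f : Fin N → ℝ) : ∑ i, a * b i * f i = a * ∑ i, b i * f i := by
    simp only [mul_assoc, mul_sum]
  simp only [mul_add, mul_sub, sum_add_distrib, sum_sub_distrib, hrow, hcol]
  simp only [mul_comm (b _) (-∑ j, b j)] at h
  rw [hpull] at h
  linarith

theorem schoenberg_exp_posDefKernel {X : Type*} (ψ : X → X → ℝ)
    (hsymm : ∀ x y, ψ x y = ψ y x)
    (hdiag : ∀ x, ψ x x = 0)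
    (hneg : ∀ (N : ℕ) (x : Fin N → X) (c : Fin N → ℝ), (∑ i, c i) = 0 →
      ∑ i, ∑ j, c i * c j * ψ (x i) (x j) ≤ 0)
    (γ : ℝ) (hγ : 0 < γ) :
    IsPosDefKernel (fun x y => Real.exp (-γ * ψ x y)) := by
  rcases isEmpty_or_nonempty X with _ | ⟨⟨x₀⟩⟩
  · exact IsPosDefKernel.of_isEmpty _
  have hφ := isPosDefKernel_centered hsymm hdiag hneg x₀
  convert (hφ.const_mul hγ.le).exp.apply_mul_apply_mul (fun x => Real.exp (-γ * ψ x x₀))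
    using 3 with x y
  rw [← Real.exp_add, ← Real.exp_add]
  congr 1
  ring
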